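/- Let H₀ be a self-adjoint operator bounded below on a Hilbert space with lowest eigenvalue E₁(H₀) and second eigenvalue (counted via min-max) E₂(H₀), and let ψ be a normalized ground state of H₀. Let V ≥ 0 be a bounded multiplication operator with V > 0 a.e. If E₁(H₀) + ⟨ψ, V^{-1}ψ⟩^{-1} < E₂(H₀), then the lowest eigenvalue of H₀ + V satisfies E₁(H₀ + V) ≥ E₁(H₀) + ⟨ψ, V^{-1}ψ⟩^{-1}. -/

import Mathlib

open scoped RealInnerProductSpace

/-- Thirring's inequality (finite-dimensional formulation). Let `H₀` be a self-adjoint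
operator on `ℝⁿ` with normalized ground state `ψ`, ground state energy `E₁`, and with
`H₀ ≥ E₂` on the orthogonal complement of `ψ` (i.e. `E₂` is the second min-max eigenvalue).
Let `V` be a multiplication (diagonal) operator with `V > 0`. If
`E₁ + ⟨ψ, V⁻¹ψ⟩⁻¹ < E₂`, then the lowest eigenvalue of `H₀ + V` is bounded below by
`E₁ + ⟨ψ, V⁻¹ψ⟩⁻¹`, i.e. the quadratic form of `H₀ + V` dominates this value. -/
theorem thirring_inequality (n : ℕ) (H₀ : EuclideanSpace ℝ (Fin n) →L[ℝ] EuclideanSpace ℝ (Fin n))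
    (hsa : IsSelfAdjoint H₀)
    (ψ : EuclideanSpace ℝ (Fin n)) (hψ : ‖ψ‖ = 1)
    (E₁ E₂ : ℝ)
    (hground : H₀ ψ = E₁ • ψ)
    (hE₁ : ∀ v : EuclideanSpace ℝ (Fin n), E₁ * ‖v‖^2 ≤ ⟪v, H₀ v⟫)
    (hE₂ : ∀ v : EuclideanSpace ℝ (Fin n), ⟪ψ, v⟫ = 0 → E₂ * ‖v‖^2 ≤ ⟪v, H₀ v⟫)
    (V : Fin n → ℝ) (hV : ∀ i, 0 < V i)
    (hgap : E₁ + (∑ i, (V i)⁻¹ * (ψ i)^2)⁻¹ < E₂) :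
    ∀ v : EuclideanSpace ℝ (Fin n),
      (E₁ + (∑ i, (V i)⁻¹ * (ψ i)^2)⁻¹) * ‖v‖^2
        ≤ ⟪v, H₀ v⟫ + ∑ i, V i * (v i)^2 := by
  intro v
  set S := ∑ i, (V i)⁻¹ * (ψ i)^2 with hSdef
  -- S > 0
  have hψ0 : ψ ≠ 0 := by intro h; rw [h] at hψ; simp at hψ
  obtain ⟨j, hj⟩ : ∃ j, ψ j ≠ 0 := by
    by_contra h
    push_neg at h
    exact hψ0 (by ext i; simpa using h i)
  have hSpos : 0 < S := by
    refine Finset.sum_pos' (fun i _ => mul_nonneg (inv_nonneg.2 (hV i).le) (sq_nonneg _)) ⟨j, Finset.mem_univ j, ?_⟩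
    exact mul_pos (inv_pos.2 (hV j))
      (lt_of_le_of_ne (sq_nonneg _) (Ne.symm (pow_ne_zero 2 hj)))
  have hμpos : 0 < S⁻¹ := inv_pos.2 hSpos
  have hμS : S⁻¹ * S = 1 := inv_mul_cancel₀ hSpos.ne'
  set a : ℝ := ⟪ψ, v⟫ with hadef
  set w : EuclideanSpace ℝ (Fin n) := v - a • ψ with hwdef
  have hnψ : ⟪ψ, ψ⟫ = 1 := by
    rw [real_inner_self_eq_norm_sq, hψ]; norm_num
  have hwψ : ⟪ψ, w⟫ = 0 := by
    rw [hwdef, inner_sub_right, real_inner_smul_right, hnψ]; ring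
  have hv : v = a • ψ + w := by rw [hwdef]; abel
  -- norm decomposition
  have hnorm : ‖v‖^2 = a^2 + ‖w‖^2 := by
    rw [hv, norm_add_sq_real, real_inner_smul_left, hwψ, norm_smul]
    simp [hψ, mul_pow, sq_abs]
  -- quadratic form decomposition
  have hsym : ∀ x y : EuclideanSpace ℝ (Fin n), ⟪H₀ x, y⟫ = ⟪x, H₀ y⟫ :=
    (ContinuousLinearMap.isSelfAdjoint_iff_isSymmetric.mp hsa)
  have hψHw : ⟪ψ, H₀ w⟫ = 0 := by
    rw [← hsym, hground, real_inner_smul_left, hwψ, mul_zero]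
  have hwψ' : ⟪w, ψ⟫ = 0 := by rw [real_inner_comm]; exact hwψ
  have hQ : ⟪v, H₀ v⟫ = E₁ * a^2 + ⟪w, H₀ w⟫ := by
    rw [hv, map_add, map_smul, hground]
    simp only [inner_add_left, inner_add_right, real_inner_smul_left,
      real_inner_smul_right, hnψ, hψHw, hwψ']
    ring
  have hwH : E₂ * ‖w‖^2 ≤ ⟪w, H₀ w⟫ := hE₂ w hwψ
  -- Cauchy-Schwarz: a² ≤ S * T
  have hainner : a = ∑ i, ψ i * v i := by
    rw [hadef]
    simp [PiLp.inner_apply, RCLike.inner_apply]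
    exact Finset.sum_congr rfl fun i _ => mul_comm _ _
  have hCS : a^2 ≤ S * ∑ i, V i * (v i)^2 := by
    rw [hainner, hSdef]
    have key : ∀ i : Fin n, ψ i * v i =
        (ψ i * (Real.sqrt (V i))⁻¹) * (Real.sqrt (V i) * v i) := by
      intro i
      have h : Real.sqrt (V i) ≠ 0 := Real.sqrt_ne_zero'.mpr (hV i)
      field_simp
    calc (∑ i, ψ i * v i)^2
        = (∑ i, (ψ i * (Real.sqrt (V i))⁻¹) * (Real.sqrt (V i) * v i))^2 := by
          simp_rw [← key]
      _ ≤ (∑ i, (ψ i * (Real.sqrt (V i))⁻¹)^2) * ∑ i, (Real.sqrt (V i) * v i)^2 :=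
          Finset.sum_mul_sq_le_sq_mul_sq _ _ _
      _ = (∑ i, (V i)⁻¹ * (ψ i)^2) * ∑ i, V i * (v i)^2 := by
          congr 1 <;> refine Finset.sum_congr rfl fun i _ => ?_
          · rw [mul_pow, inv_pow, Real.sq_sqrt (hV i).le]; ring
          · rw [mul_pow, Real.sq_sqrt (hV i).le]
  set T := ∑ i, V i * (v i)^2 with hTdef
  have hμa : S⁻¹ * a^2 ≤ T := by
    have := mul_le_mul_of_nonneg_left hCS hμpos.le
    calc S⁻¹ * a^2 ≤ S⁻¹ * (S * T) := this
      _ = T := by rw [← mul_assoc, hμS, one_mul]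
  have hwn : (0:ℝ) ≤ ‖w‖^2 := by positivity
  rw [hnorm, hQ]
  nlinarith [hwn, hμa, hwH, hgap, hμpos]
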